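/- arXiv:2303.16729 — 2 statements merged into one kernel-verified Lean document; each statement's English description precedes it below -/
import Mathlib

section
/- Let k ≥ 3 and let d ≥ 0 be an even integer. Suppose there exists a binary self-orthogonal [g(k,d+4), k, d+4] Griesmer code and that g(k,d+4) > 2^k. Then for every integer N with g(k,d+2)+1 ≤ N ≤ g(k,d+4)−1: (i) there exists a binary self-orthogonal [N,k] code with minimum distance d+2, and (ii) every binary self-orthogonal [N,k] code has minimum distance at most d+2. In other words, d_so(N,k) = d+2. -/
open Finset

/-- Hamming weight of a binary vector. -/
def wt {ι : Type*} [Fintype ι] (x : ι → ZMod 2) : ℕ :=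
  (Finset.univ.filter fun i => x i ≠ 0).card

/-- A binary linear code is self-orthogonal if any two codewords are orthogonal. -/
def SelfOrthogonal {ι : Type*} [Fintype ι] (C : Submodule (ZMod 2) (ι → ZMod 2)) : Prop :=
  ∀ x ∈ C, ∀ y ∈ C, ∑ i, x i * y i = 0

/-- `C` has minimum distance exactly `d`: some nonzero codeword has weight `d`,
and every nonzero codeword has weight at least `d`. -/
def HasMinDist {ι : Type*} [Fintype ι] (C : Submodule (ZMod 2) (ι → ZMod 2)) (d : ℕ) : Prop :=
  (∃ x ∈ C, x ≠ 0 ∧ wt x = d) ∧ ∀ x ∈ C, x ≠ 0 → d ≤ wt x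

/-- The Griesmer function `g(k,d) = ∑_{i=0}^{k-1} ⌈d/2^i⌉` (ceiling division). -/
def griesmerBound (k d : ℕ) : ℕ :=
  ∑ i ∈ Finset.range k, (d + 2 ^ i - 1) / 2 ^ i

/-!
Weights in a self-orthogonal binary code are even, so a minimum distance above `d + 2` is at
least `d + 4`, which the Griesmer bound excludes below length `g(k, d + 4)`.

For existence, `d ≡ 2 (mod 4)` is impossible: in a self-orthogonal code
`wt x + wt y + wt (x + y) ≡ 0 (mod 4)`, so the residual code of a minimum weight word of weight
`D ≡ 2 (mod 4)` has minimum distance `> D / 2`, and the Griesmer bound for it forces length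
`> g(k, D)`. If `4 ∣ d`, then `g(k, d + 4) = g(k, d + 2) + 3`, so `N ≥ g(k, d + 4) - 2`. A code of
length `> 2 ^ k` has two equal coordinates; deleting them from the given Griesmer code keeps it
self-orthogonal of dimension `k` and minimum distance `≥ d + 2`, and zero coordinates bring the
length up to `N`.
-/

open Module

section Weight

theorem pi_zmod_two_add_eq_zero_iff {ι : Type*} {x y : ι → ZMod 2} : x + y = 0 ↔ x = y :=
  ⟨fun h => funext fun i => CharTwo.add_eq_zero.1 (congrFun h i), fun h => h ▸ by
    ext i; exact CharTwo.add_self_eq_zero (x i)⟩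

variable {ι : Type*} [Fintype ι]

theorem wt_eq_zero_iff {x : ι → ZMod 2} : wt x = 0 ↔ x = 0 := hammingNorm_eq_zero

theorem wt_eq_sum_val (x : ι → ZMod 2) : wt x = ∑ i, (x i).val := by
  rw [wt, card_filter]
  exact sum_congr rfl fun i _ => by generalize x i = a; revert a; decide

theorem natCast_wt (x : ι → ZMod 2) : (wt x : ZMod 2) = ∑ i, x i := by
  simp [wt_eq_sum_val]

theorem sum_mul_eq_natCast_wt_mul (x y : ι → ZMod 2) : ∑ i, x i * y i = wt (x * y) :=
  (natCast_wt (x * y)).symm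

theorem wt_add_add_two_mul_wt_mul (x y : ι → ZMod 2) :
    wt (x + y) + 2 * wt (x * y) = wt x + wt y := by
  simp only [wt_eq_sum_val, mul_sum, ← sum_add_distrib]
  refine sum_congr rfl fun i _ => ?_
  simp only [Pi.add_apply, Pi.mul_apply]
  generalize x i = a; generalize y i = b; revert a b; decide

theorem SelfOrthogonal.two_dvd_wt_mul {C : Submodule (ZMod 2) (ι → ZMod 2)}
    (hC : SelfOrthogonal C) {x y : ι → ZMod 2} (hx : x ∈ C) (hy : y ∈ C) : 2 ∣ wt (x * y) := by
  rw [← ZMod.natCast_eq_zero_iff, ← sum_mul_eq_natCast_wt_mul]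
  exact hC x hx y hy

theorem SelfOrthogonal.two_dvd_wt {C : Submodule (ZMod 2) (ι → ZMod 2)}
    (hC : SelfOrthogonal C) {x : ι → ZMod 2} (hx : x ∈ C) : 2 ∣ wt x := by
  have hxx : x * x = x := funext fun i => by
    simp only [Pi.mul_apply]; generalize x i = a; revert a; decide
  simpa [hxx] using hC.two_dvd_wt_mul hx hx

-- `wt x + wt y + wt (x + y) = 2 * (wt x + wt y - wt (x * y))`, and these three weights are even.
theorem SelfOrthogonal.four_dvd_wt_add {C : Submodule (ZMod 2) (ι → ZMod 2)}
    (hC : SelfOrthogonal C) {x y : ι → ZMod 2} (hx : x ∈ C) (hy : y ∈ C) :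
    4 ∣ wt x + wt y + wt (x + y) := by
  have := wt_add_add_two_mul_wt_mul x y
  have := hC.two_dvd_wt_mul hx hy
  have := hC.two_dvd_wt hx
  have := hC.two_dvd_wt hy
  omega

end Weight

section GriesmerFunction

theorem add_two_mul_sub_one_div_two_mul (a : ℕ) {m : ℕ} (hm : 0 < m) :
    (a + 2 * m - 1) / (2 * m) = ((a + 1) / 2 + m - 1) / m := by
  rw [← Nat.div_div_eq_div_mul]
  congr 1
  omega

theorem griesmerBound_succ (k d : ℕ) :
    griesmerBound (k + 1) d = d + griesmerBound k ((d + 1) / 2) := by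
  rw [griesmerBound, sum_range_succ', griesmerBound, add_comm]
  congr 1
  · simp
  · refine sum_congr rfl fun i _ => ?_
    rw [pow_succ', add_two_mul_sub_one_div_two_mul d (by positivity)]

theorem griesmerBound_mono (k : ℕ) : Monotone (griesmerBound k) :=
  fun _ _ h => sum_le_sum fun _ _ => Nat.div_le_div_right (by omega)

theorem griesmerBound_strictMono {k : ℕ} (hk : k ≠ 0) : StrictMono (griesmerBound k) := by
  obtain ⟨k, rfl⟩ := Nat.exists_eq_succ_of_ne_zero hk
  intro a b h
  have := griesmerBound_mono k (show (a + 1) / 2 ≤ (b + 1) / 2 by omega)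
  rw [griesmerBound_succ, griesmerBound_succ]
  omega

theorem griesmerBound_add_four {k d : ℕ} (hk : 2 ≤ k) (hd : 4 ∣ d) :
    griesmerBound k (d + 4) = griesmerBound k (d + 2) + 3 := by
  obtain ⟨k, rfl⟩ : ∃ j, k = j + 1 + 1 := ⟨k - 2, by omega⟩
  simp only [griesmerBound_succ]
  rw [show ((d + 4 + 1) / 2 + 1) / 2 = ((d + 2 + 1) / 2 + 1) / 2 by omega]
  omega

end GriesmerFunction

section WeightPreserving

theorem Submodule.finrank_map_eq_of_forall_eq_zero {K V W : Type*} [DivisionRing K]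
    [AddCommGroup V] [Module K V] [AddCommGroup W] [Module K W] {p : Submodule K V}
    {f : V →ₗ[K] W} (hf : ∀ x ∈ p, f x = 0 → x = 0) : finrank K (p.map f) = finrank K p := by
  rw [← LinearMap.range_domRestrict]
  exact LinearMap.finrank_range_of_inj <|
    (injective_iff_map_eq_zero _).2 fun x hx => Subtype.ext (hf x x.2 hx)

variable {ι κ : Type*} [Fintype ι] [Fintype κ]

theorem wt_extend_zero {e : ι → κ} (he : e.Injective) (x : ι → ZMod 2) :
    wt (Function.extend e x 0) = wt x := by
  classical
  rw [wt, wt, ← card_map ⟨e, he⟩]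
  congr 1
  ext m
  simp only [mem_filter, mem_univ, true_and, mem_map, Function.Embedding.coeFn_mk]
  by_cases hm : ∃ i, e i = m
  · obtain ⟨i, rfl⟩ := hm
    simp [he.extend_apply, he.eq_iff]
  · rw [Function.extend_apply' _ _ _ hm]
    simp [not_exists.mp hm]

theorem SelfOrthogonal.map_of_wt_eq {C : Submodule (ZMod 2) (ι → ZMod 2)} (hC : SelfOrthogonal C)
    (f : (ι → ZMod 2) →ₗ[ZMod 2] κ → ZMod 2) (hf : ∀ x, wt (f x) = wt x) :
    SelfOrthogonal (C.map f) := by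
  rintro _ ⟨x, hx, rfl⟩ _ ⟨y, hy, rfl⟩
  have hfxy := wt_add_add_two_mul_wt_mul (f x) (f y)
  have hxy := wt_add_add_two_mul_wt_mul x y
  rw [← map_add, hf, hf, hf] at hfxy
  rw [sum_mul_eq_natCast_wt_mul, show wt (f x * f y) = wt (x * y) by omega,
    ← sum_mul_eq_natCast_wt_mul]
  exact hC x hx y hy

theorem finrank_map_of_wt_eq (C : Submodule (ZMod 2) (ι → ZMod 2))
    {f : (ι → ZMod 2) →ₗ[ZMod 2] κ → ZMod 2} (hf : ∀ x, wt (f x) = wt x) :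
    finrank (ZMod 2) (C.map f) = finrank (ZMod 2) C :=
  Submodule.finrank_map_eq_of_forall_eq_zero fun x _ hx => by
    rw [← wt_eq_zero_iff, ← hf, hx, wt_eq_zero_iff]

end WeightPreserving

section Restriction

variable {ι : Type*} [Fintype ι]

abbrev coordRestrict (p : ι → Prop) : (ι → ZMod 2) →ₗ[ZMod 2] {i // p i} → ZMod 2 :=
  LinearMap.funLeft (ZMod 2) (ZMod 2) Subtype.val

theorem wt_coordRestrict (p : ι → Prop) [DecidablePred p] (x : ι → ZMod 2) :
    wt (coordRestrict p x) = ∑ i, if p i then (x i).val else 0 := by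
  rw [wt_eq_sum_val, ← sum_filter]
  exact (sum_subtype (p := p) (univ.filter p) (by simp) fun i => (x i).val).symm

theorem card_zeroSet_add_wt (x : ι → ZMod 2) :
    Fintype.card {i // x i = 0} + wt x = Fintype.card ι := by
  rw [Fintype.card_subtype, wt, card_filter_add_card_filter_not, card_univ]

theorem wt_add_wt_add_eq (x y : ι → ZMod 2) :
    wt y + wt (y + x) = wt x + 2 * wt (coordRestrict (x · = 0) y) := by
  rw [wt_coordRestrict]
  simp only [wt_eq_sum_val, mul_sum, ← sum_add_distrib]
  refine sum_congr rfl fun i _ => ?_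
  simp only [Pi.add_apply]
  generalize x i = a; generalize y i = b; revert a b; decide

theorem sum_subtype_not_mem_add_sum {M : Type*} [AddCommMonoid M] [DecidableEq ι] (s : Finset ι)
    (f : ι → M) : ∑ i : {i // i ∉ s}, f i + ∑ i ∈ s, f i = ∑ i, f i := by
  rw [← sum_subtype sᶜ (fun _ => mem_compl) f]
  exact sum_compl_add_sum s f

theorem wt_le_wt_coordRestrict_add_card [DecidableEq ι] (s : Finset ι) (x : ι → ZMod 2) :
    wt x ≤ wt (coordRestrict (· ∉ s) x) + s.card := by
  rw [wt_eq_sum_val, wt_eq_sum_val, ← sum_subtype_not_mem_add_sum s]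
  refine add_le_add le_rfl ?_
  simpa using sum_le_card_nsmul s (fun i => (x i).val) 1 fun i _ => by
    generalize x i = a; revert a; decide

theorem card_subtype_not_mem [DecidableEq ι] (s : Finset ι) :
    Fintype.card {i // i ∉ s} = Fintype.card ι - s.card := by
  simp

end Restriction

section Residual

variable {ι : Type*} [Fintype ι]

theorem exists_hasMinDist {C : Submodule (ZMod 2) (ι → ZMod 2)} (hC : C ≠ ⊥) :
    ∃ e, HasMinDist C e := by
  classical
  obtain ⟨x, hx, hx0⟩ := Submodule.exists_mem_ne_zero_of_ne_bot hC
  have h : ∃ w, ∃ x ∈ C, x ≠ 0 ∧ wt x = w := ⟨_, x, hx, hx0, rfl⟩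
  exact ⟨Nat.find h, Nat.find_spec h, fun y hy hy0 => Nat.find_min' h ⟨y, hy, hy0, rfl⟩⟩

def residualCode (C : Submodule (ZMod 2) (ι → ZMod 2)) (x : ι → ZMod 2) :
    Submodule (ZMod 2) ({i // x i = 0} → ZMod 2) :=
  C.map (coordRestrict (x · = 0))

variable {C : Submodule (ZMod 2) (ι → ZMod 2)} {x : ι → ZMod 2}

theorem exists_wt_add_wt_add_eq_of_mem_residualCode {y' : {i // x i = 0} → ZMod 2}
    (hy' : y' ∈ residualCode C x) (hy'0 : y' ≠ 0) :
    ∃ y ∈ C, y ≠ 0 ∧ y + x ≠ 0 ∧ wt y + wt (y + x) = wt x + 2 * wt y' := by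
  obtain ⟨y, hy, rfl⟩ := hy'
  refine ⟨y, hy, ?_, ?_, wt_add_wt_add_eq x y⟩
  · rintro rfl
    exact hy'0 (map_zero _)
  · intro h
    obtain rfl := pi_zmod_two_add_eq_zero_iff.1 h
    exact hy'0 (funext fun i => i.2)

/-- The kernel of the restriction to the zero set of a minimum weight codeword `x` is `{0, x}`,
because `wt y + wt (y + x) = wt x` for every `y` in that kernel. -/
theorem finrank_residualCode_add_one (hx : x ∈ C) (hx0 : x ≠ 0)
    (hmin : ∀ y ∈ C, y ≠ 0 → wt x ≤ wt y) :
    finrank (ZMod 2) (residualCode C x) + 1 = finrank (ZMod 2) C := by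
  set f := (coordRestrict (x · = 0)).domRestrict C
  have hker : LinearMap.ker f = Submodule.span (ZMod 2) {⟨x, hx⟩} := by
    refine le_antisymm (fun y hy => ?_) ((Submodule.span_singleton_le_iff_mem _ _).2 ?_)
    · obtain ⟨y, hyC⟩ := y
      have hwt := wt_add_wt_add_eq x y
      rw [show coordRestrict (x · = 0) y = 0 from hy, wt_eq_zero_iff.2 rfl] at hwt
      rw [Submodule.mem_span_singleton]
      by_cases hy0 : y = 0
      · exact ⟨0, by rw [zero_smul]; exact Subtype.ext hy0.symm⟩
      by_cases hyx : y + x = 0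
      · exact ⟨1, by simp [pi_zmod_two_add_eq_zero_iff.1 hyx]⟩
      have := hmin y hyC hy0
      have := hmin _ (C.add_mem hyC hx) hyx
      exact absurd (wt_eq_zero_iff.1 (by omega)) hx0
    · exact funext fun i => i.2
  have hrank := LinearMap.finrank_range_add_finrank_ker f
  rwa [LinearMap.range_domRestrict, hker, finrank_span_singleton] at hrank
  exact Subtype.coe_ne_coe.1 hx0

end Residual

theorem griesmerBound_finrank_le_card {ι : Type*} [Fintype ι]
    (C : Submodule (ZMod 2) (ι → ZMod 2)) {d : ℕ} (hd : ∀ x ∈ C, x ≠ 0 → d ≤ wt x) :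
    griesmerBound (finrank (ZMod 2) C) d ≤ Fintype.card ι := by
  induction hk : finrank (ZMod 2) C generalizing ι C d with
  | zero => exact Nat.zero_le _
  | succ k ih =>
    obtain ⟨w, ⟨x, hx, hx0, rfl⟩, hmin⟩ := exists_hasMinDist (C := C) (by
      rintro rfl; simp at hk)
    have hrank : finrank (ZMod 2) (residualCode C x) = k := by
      have := finrank_residualCode_add_one hx hx0 hmin; omega
    have hres : ∀ y' ∈ residualCode C x, y' ≠ 0 → (wt x + 1) / 2 ≤ wt y' := fun y' hy' hy'0 => by
      obtain ⟨y, hy, hy0, hyx0, hwt⟩ := exists_wt_add_wt_add_eq_of_mem_residualCode hy' hy'0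
      have := hmin y hy hy0
      have := hmin _ (C.add_mem hy hx) hyx0
      omega
    have := ih (residualCode C x) hres hrank
    have := card_zeroSet_add_wt x
    calc griesmerBound (k + 1) d ≤ griesmerBound (k + 1) (wt x) :=
          griesmerBound_mono _ (hd x hx hx0)
      _ = wt x + griesmerBound k ((wt x + 1) / 2) := griesmerBound_succ k (wt x)
      _ ≤ Fintype.card ι := by omega

section SelfOrthogonal

variable {ι : Type*} [Fintype ι] {C : Submodule (ZMod 2) (ι → ZMod 2)}

/-- As `4 ∣ wt y + D + wt (y + x)` and `D ≡ 2 (mod 4)`, the words `y` and `y + x` cannot both have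
weight `D`, so the residual code of `x` has minimum distance `> D / 2`. -/
theorem SelfOrthogonal.griesmerBound_lt_card (hC : SelfOrthogonal C) {D : ℕ} (hD : HasMinDist C D)
    (hD4 : D % 4 = 2) (hk : 2 ≤ finrank (ZMod 2) C) :
    griesmerBound (finrank (ZMod 2) C) D < Fintype.card ι := by
  obtain ⟨⟨x, hx, hx0, rfl⟩, hmin⟩ := hD
  have hrank := finrank_residualCode_add_one hx hx0 hmin
  have hres : ∀ y' ∈ residualCode C x, y' ≠ 0 → wt x / 2 + 1 ≤ wt y' := fun y' hy' hy'0 => by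
    obtain ⟨y, hy, hy0, hyx0, hwt⟩ := exists_wt_add_wt_add_eq_of_mem_residualCode hy' hy'0
    have := hmin y hy hy0
    have := hmin _ (C.add_mem hy hx) hyx0
    have := hC.four_dvd_wt_add hy hx
    omega
  have hgr := griesmerBound_finrank_le_card _ hres
  have hlt := griesmerBound_strictMono (k := finrank (ZMod 2) (residualCode C x)) (by omega)
    (show wt x / 2 < wt x / 2 + 1 by omega)
  have := card_zeroSet_add_wt x
  rw [← hrank, griesmerBound_succ, show (wt x + 1) / 2 = wt x / 2 by omega]
  omega

theorem SelfOrthogonal.le_of_hasMinDist (hC : SelfOrthogonal C) {d e : ℕ} (he : HasMinDist C e)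
    (hd : 2 ∣ d) (hlen : Fintype.card ι < griesmerBound (finrank (ZMod 2) C) (d + 4)) :
    e ≤ d + 2 := by
  obtain ⟨⟨x, hx, -, rfl⟩, hmin⟩ := he
  have := hC.two_dvd_wt hx
  have := griesmerBound_finrank_le_card C hmin
  by_contra! h
  have := griesmerBound_mono (finrank (ZMod 2) C) (show d + 4 ≤ wt x by omega)
  omega

end SelfOrthogonal

section Construction

variable {ι : Type*} [Fintype ι] {C : Submodule (ZMod 2) (ι → ZMod 2)}

theorem exists_ne_forall_apply_eq (C : Submodule (ZMod 2) (ι → ZMod 2))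
    (h : 2 ^ finrank (ZMod 2) C < Fintype.card ι) : ∃ i j, i ≠ j ∧ ∀ x ∈ C, x i = x j := by
  let b := Module.finBasis (ZMod 2) C
  obtain ⟨i, j, hij, hcol⟩ := Fintype.exists_ne_map_eq_of_card_lt
    (fun i t => (b t : ι → ZMod 2) i) (by simpa using h)
  refine ⟨i, j, hij, fun x hx => LinearMap.congr_fun (?_ : LinearMap.proj i ∘ₗ C.subtype =
    LinearMap.proj j ∘ₗ C.subtype) ⟨x, hx⟩⟩
  exact b.ext fun t => congrFun hcol t

theorem SelfOrthogonal.map_coordRestrict_not_mem [DecidableEq ι] (hC : SelfOrthogonal C)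
    {s : Finset ι} (hs : ∀ x ∈ C, ∀ y ∈ C, ∑ i ∈ s, x i * y i = 0) :
    SelfOrthogonal (C.map (coordRestrict (· ∉ s))) := by
  rintro _ ⟨x, hx, rfl⟩ _ ⟨y, hy, rfl⟩
  have := sum_subtype_not_mem_add_sum s fun i => x i * y i
  rwa [hs x hx y hy, add_zero, hC x hx y hy] at this

theorem SelfOrthogonal.exists_fin_of_card_le (hC : SelfOrthogonal C) {d N : ℕ}
    (hmin : ∀ x ∈ C, x ≠ 0 → d ≤ wt x) (hN : Fintype.card ι ≤ N) :
    ∃ C' : Submodule (ZMod 2) (Fin N → ZMod 2), finrank (ZMod 2) C' = finrank (ZMod 2) C ∧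
      SelfOrthogonal C' ∧ ∀ y ∈ C', y ≠ 0 → d ≤ wt y := by
  obtain ⟨e⟩ : Nonempty (ι ↪ Fin N) := Function.Embedding.nonempty_of_card_le (by simpa using hN)
  set f := Function.ExtendByZero.linearMap (ZMod 2) e
  have hf : ∀ x, wt (f x) = wt x := wt_extend_zero e.injective
  refine ⟨C.map f, finrank_map_of_wt_eq C hf, hC.map_of_wt_eq f hf, ?_⟩
  rintro _ ⟨x, hx, rfl⟩ hx0
  rw [hf]
  exact hmin x hx (by rintro rfl; exact hx0 (map_zero f))

theorem SelfOrthogonal.exists_fin_of_apply_eq (hC : SelfOrthogonal C) {i j : ι} (hij : i ≠ j)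
    (hcol : ∀ x ∈ C, x i = x j) {d N : ℕ} (hd : d ≠ 0) (hmin : ∀ x ∈ C, x ≠ 0 → d + 2 ≤ wt x)
    (hN : Fintype.card ι ≤ N + 2) :
    ∃ C' : Submodule (ZMod 2) (Fin N → ZMod 2), finrank (ZMod 2) C' = finrank (ZMod 2) C ∧
      SelfOrthogonal C' ∧ ∀ y ∈ C', y ≠ 0 → d ≤ wt y := by
  classical
  set s : Finset ι := {i, j}
  have hwt (x : ι → ZMod 2) : wt x ≤ wt (coordRestrict (· ∉ s) x) + 2 := by
    have := wt_le_wt_coordRestrict_add_card s x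
    rwa [show s.card = 2 from card_pair hij] at this
  have hmin' : ∀ y ∈ C.map (coordRestrict (· ∉ s)), y ≠ 0 → d ≤ wt y := by
    rintro _ ⟨x, hx, rfl⟩ hx0
    have := hmin x hx (by rintro rfl; exact hx0 (map_zero _))
    have := hwt x
    omega
  have hrank : finrank (ZMod 2) (C.map (coordRestrict (· ∉ s))) = finrank (ZMod 2) C := by
    refine Submodule.finrank_map_eq_of_forall_eq_zero fun x hx hx0 => by_contra fun h => ?_
    have := hmin x hx h
    have := hwt x
    rw [hx0, wt_eq_zero_iff.2 rfl] at this
    omega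
  have hso := hC.map_coordRestrict_not_mem fun x hx y hy => by
    rw [sum_pair hij, hcol x hx, hcol y hy]
    exact CharTwo.add_self_eq_zero _
  rw [← hrank]
  exact hso.exists_fin_of_card_le hmin' (by rw [card_subtype_not_mem, card_pair hij]; omega)

end Construction

theorem stmt9 (k d : ℕ) (hk : 3 ≤ k) (hd2 : 2 ∣ d)
    (hbig : 2 ^ k < griesmerBound k (d + 4))
    (hex : ∃ C : Submodule (ZMod 2) (Fin (griesmerBound k (d + 4)) → ZMod 2),
      Module.finrank (ZMod 2) C = k ∧ SelfOrthogonal C ∧ HasMinDist C (d + 4)) :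
    ∀ N : ℕ, griesmerBound k (d + 2) + 1 ≤ N → N ≤ griesmerBound k (d + 4) - 1 →
      (∃ C : Submodule (ZMod 2) (Fin N → ZMod 2),
        Module.finrank (ZMod 2) C = k ∧ SelfOrthogonal C ∧ HasMinDist C (d + 2)) ∧
      (∀ C : Submodule (ZMod 2) (Fin N → ZMod 2),
        Module.finrank (ZMod 2) C = k → SelfOrthogonal C →
        ∀ e : ℕ, HasMinDist C e → e ≤ d + 2) := by
  intro N hN₁ hN₂
  obtain ⟨C₀, hk₀, hso₀, hmd₀⟩ := hex
  have hd4 : 4 ∣ d := by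
    by_contra h
    have := hso₀.griesmerBound_lt_card hmd₀ (by omega) (by omega)
    simp [hk₀] at this
  have hgap := griesmerBound_add_four (by omega : 2 ≤ k) hd4
  have hupper (C : Submodule (ZMod 2) (Fin N → ZMod 2)) (hC : finrank (ZMod 2) C = k)
      (hso : SelfOrthogonal C) (e : ℕ) (he : HasMinDist C e) : e ≤ d + 2 :=
    hso.le_of_hasMinDist he hd2 (by simp [hC]; omega)
  refine ⟨?_, hupper⟩
  obtain ⟨i, j, hij, hcol⟩ := exists_ne_forall_apply_eq C₀ (by simpa [hk₀] using hbig)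
  obtain ⟨C, hC, hso, hmin⟩ := hso₀.exists_fin_of_apply_eq (d := d + 2) (N := N) hij hcol
    (by omega) hmd₀.2 (by rw [Fintype.card_fin]; omega)
  rw [hk₀] at hC
  obtain ⟨e, he⟩ := exists_hasMinDist (C := C) (by rintro rfl; simp at hC; omega)
  obtain ⟨x, hx, hx0, rfl⟩ := he.1
  have hwt : wt x = d + 2 := le_antisymm (hupper C hC hso _ he) (hmin x hx hx0)
  exact ⟨C, hC, hso, hwt ▸ he⟩
end

section
/- There is no binary self-orthogonal [54,6,26] code; that is, no 6-dimensional self-orthogonal subspace of F_2^54 has minimum distance 26. -/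
open Finset

/-!
On a self-orthogonal binary code all weights are even and any two codewords overlap in an even
number of coordinates, so `wt (x + y) = wt x + wt y - 2 |x ∩ y|` makes `x ↦ wt x / 2 mod 2` a
linear functional. Its kernel, the doubly-even subcode, has codimension at most one, so here it has
at least `32` words, all of nonzero weight at least `28`. Double counting the total weight of
these words coordinate by coordinate (Plotkin) would give `31 * 28 ≤ 54 * 32 / 2`, which fails.
-/

variable {ι : Type*}

/-- Adding a word that is nonzero at `i` swaps the words that vanish at `i` with those that do
not. -/
lemma two_mul_card_apply_ne_zero_le (K : Submodule (ZMod 2) (ι → ZMod 2)) [Fintype K] (i : ι) :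
    2 * #{x : K | (x : ι → ZMod 2) i ≠ 0} ≤ Fintype.card K := by
  by_cases h : ∃ y : K, (y : ι → ZMod 2) i ≠ 0
  · obtain ⟨y, hy⟩ := h
    have swap : ∀ a b : ZMod 2, b ≠ 0 → (a + b = 0 ↔ a ≠ 0) := by decide
    have halves : #{x : K | (x : ι → ZMod 2) i ≠ 0} = #{x : K | ¬ (x : ι → ZMod 2) i ≠ 0} :=
      card_equiv (Equiv.addRight y) fun x => by simp [swap _ _ hy]
    have := card_filter_add_card_filter_not (s := univ) (p := fun x : K => (x : ι → ZMod 2) i ≠ 0)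
    rw [card_univ] at this
    omega
  · push Not at h
    simp [h]

variable [Fintype ι]

lemma wt_add_add_two_mul_card (x y : ι → ZMod 2) :
    wt (x + y) + 2 * #{i | x i ≠ 0 ∧ y i ≠ 0} = wt x + wt y := by
  have key : ∀ a b : ZMod 2,
      (if a + b ≠ 0 then 1 else 0) + 2 * (if a ≠ 0 ∧ b ≠ 0 then 1 else 0)
        = (if a ≠ 0 then 1 else 0) + (if b ≠ 0 then (1 : ℕ) else 0) := by
    decide
  simp only [wt, card_filter, mul_sum, ← sum_add_distrib, Pi.add_apply, key]

lemma sum_mul_eq_card (x y : ι → ZMod 2) :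
    ∑ i, x i * y i = (#{i | x i ≠ 0 ∧ y i ≠ 0} : ZMod 2) := by
  have key : ∀ a b : ZMod 2, a * b = ((if a ≠ 0 ∧ b ≠ 0 then 1 else 0 : ℕ) : ZMod 2) := by
    decide
  simp only [card_filter, Nat.cast_sum, ← key]

namespace SelfOrthogonal

variable {C : Submodule (ZMod 2) (ι → ZMod 2)}

lemma two_dvd_card (hC : SelfOrthogonal C) {x y : ι → ZMod 2} (hx : x ∈ C) (hy : y ∈ C) :
    2 ∣ #{i | x i ≠ 0 ∧ y i ≠ 0} :=
  (ZMod.natCast_eq_zero_iff _ 2).mp ((sum_mul_eq_card x y).symm.trans (hC x hx y hy))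

lemma two_dvd_wt_s16 (hC : SelfOrthogonal C) {x : ι → ZMod 2} (hx : x ∈ C) : 2 ∣ wt x := by
  simpa only [wt, and_self] using hC.two_dvd_card hx hx

def halfWeight (hC : SelfOrthogonal C) : C →ₗ[ZMod 2] ZMod 2 where
  toFun x := ((wt (x : ι → ZMod 2) / 2 : ℕ) : ZMod 2)
  map_add' x y := by
    obtain ⟨s, hs⟩ := hC.two_dvd_card x.2 y.2
    have hsum := wt_add_add_two_mul_card (x : ι → ZMod 2) y
    obtain ⟨a, ha⟩ := hC.two_dvd_wt_s16 x.2
    obtain ⟨b, hb⟩ := hC.two_dvd_wt_s16 y.2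
    obtain ⟨c, hc⟩ := hC.two_dvd_wt_s16 (x + y).2
    have habc : c + 2 * s = a + b := by
      rw [Submodule.coe_add] at hc
      omega
    have hs0 : ((2 * s : ℕ) : ZMod 2) = 0 := (ZMod.natCast_eq_zero_iff _ 2).mpr (dvd_mul_right 2 s)
    rw [hc, ha, hb]
    simp only [Nat.mul_div_cancel_left _ two_pos]
    rw [← Nat.cast_add, ← habc, Nat.cast_add, hs0, add_zero]
  map_smul' c x := by
    obtain rfl | rfl : c = 0 ∨ c = 1 := by revert c; decide
    · simp [wt]
    · simp

def doublyEvenSubcode (hC : SelfOrthogonal C) : Submodule (ZMod 2) (ι → ZMod 2) :=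
  (LinearMap.ker hC.halfWeight).map C.subtype

lemma doublyEvenSubcode_le (hC : SelfOrthogonal C) : hC.doublyEvenSubcode ≤ C := by
  rintro _ ⟨y, -, rfl⟩
  exact y.2

lemma four_dvd_wt_of_mem_doublyEvenSubcode (hC : SelfOrthogonal C) {x : ι → ZMod 2}
    (hx : x ∈ hC.doublyEvenSubcode) : 4 ∣ wt x := by
  obtain ⟨y, hy, rfl⟩ := hx
  have h2 := hC.two_dvd_wt_s16 y.2
  have h4 : 2 ∣ wt (y : ι → ZMod 2) / 2 := (ZMod.natCast_eq_zero_iff _ 2).mp hy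
  simp only [Submodule.subtype_apply]
  omega

lemma finrank_le_finrank_doublyEvenSubcode_add_one (hC : SelfOrthogonal C) :
    Module.finrank (ZMod 2) C ≤ Module.finrank (ZMod 2) hC.doublyEvenSubcode + 1 := by
  rw [doublyEvenSubcode, Submodule.finrank_map_subtype_eq,
    ← LinearMap.finrank_range_add_finrank_ker hC.halfWeight]
  have := (LinearMap.range hC.halfWeight).finrank_le
  rw [Module.finrank_self] at this
  omega

end SelfOrthogonal

lemma sum_wt_eq_sum_card (K : Submodule (ZMod 2) (ι → ZMod 2)) [Fintype K] :
    ∑ x : K, wt (x : ι → ZMod 2) = ∑ i, #{x : K | (x : ι → ZMod 2) i ≠ 0} := by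
  simp only [wt, card_filter]
  exact sum_comm

lemma plotkin_bound (K : Submodule (ZMod 2) (ι → ZMod 2)) [Fintype K] {d : ℕ}
    (hd : ∀ x ∈ K, x ≠ 0 → d ≤ wt x) :
    2 * ((Fintype.card K - 1) * d) ≤ Fintype.card ι * Fintype.card K := by
  have lower : (Fintype.card K - 1) * d ≤ ∑ x : K, wt (x : ι → ZMod 2) := by
    rw [← add_sum_erase _ _ (mem_univ 0), ← card_univ, ← card_erase_of_mem (mem_univ 0),
      ← smul_eq_mul]
    refine le_add_left (card_nsmul_le_sum _ _ _ fun x hx => hd x x.2 ?_)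
    simpa using ne_of_mem_erase hx
  have upper : 2 * ∑ x : K, wt (x : ι → ZMod 2) ≤ Fintype.card ι * Fintype.card K := by
    rw [sum_wt_eq_sum_card, mul_sum, ← smul_eq_mul, ← card_univ, ← sum_const]
    exact sum_le_sum fun i _ => two_mul_card_apply_ne_zero_le K i
  omega

theorem stmt16 :
    ¬ ∃ C : Submodule (ZMod 2) (Fin 54 → ZMod 2),
      Module.finrank (ZMod 2) C = 6 ∧ SelfOrthogonal C ∧ HasMinDist C 26 := by
  classical
  rintro ⟨C, hrank, hC, -, hmin⟩
  have hdim := hC.finrank_le_finrank_doublyEvenSubcode_add_one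
  set D := hC.doublyEvenSubcode
  have hcard : 32 ≤ Fintype.card D := by
    rw [Module.card_eq_pow_finrank (K := ZMod 2), ZMod.card]
    exact le_trans (by norm_num) (Nat.pow_le_pow_right two_pos (by omega : 5 ≤ _))
  have hwt : ∀ x ∈ D, x ≠ 0 → 28 ≤ wt x := by
    intro x hx hx0
    have h26 := hmin x (hC.doublyEvenSubcode_le hx) hx0
    have h4 := hC.four_dvd_wt_of_mem_doublyEvenSubcode hx
    omega
  have := plotkin_bound D hwt
  simp only [Fintype.card_fin] at this
  omega
end
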